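/- arXiv:1707.09581 — 3 statements merged into one kernel-verified Lean document; each statement's English description precedes it below -/
import Mathlib

section
/- Let P ≥ 1 be an integer, D = P² + 4, λ₁ = (P + √D)/2, λ₂ = (P − √D)/2, and define g : ℝ → ℂ by g(t) = (λ₁ : ℂ)^t + (λ₂ : ℂ)^t, where z^t denotes the principal complex power exp(t · Log z). Then for every real t, g(t)² − g(t−1)·g(t+1) = (P² + 4) · (−1 : ℂ)^t, where (−1 : ℂ)^t = exp(iπt) is the principal power; in particular this curve is a helix of ratio P² + 4 and pitch 2 (the P-Lucas helix). -/
/-!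
Writing `A = λ₁ᵗ`, `B = λ₂ᵗ` and using `λ₁⁻¹ = -λ₂`, `λ₂⁻¹ = -λ₁`, the expression
`g(t)² − g(t−1)·g(t+1)` collapses to `(λ₁ − λ₂)² · A·B = D · A·B`. Since `λ₁ > 0`, the principal
power is multiplicative here: `λ₁ᵗ·λ₂ᵗ = (λ₁λ₂)ᵗ = (−1)ᵗ`.
-/

open Complex

namespace Complex

theorem ofReal_mul_cpow {r : ℝ} (hr : 0 < r) {x : ℂ} (hx : x ≠ 0) (t : ℂ) :
    ((r : ℂ) * x) ^ t = (r : ℂ) ^ t * x ^ t := by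
  have hr' : (r : ℂ) ≠ 0 := ofReal_ne_zero.mpr hr.ne'
  rw [cpow_def_of_ne_zero (mul_ne_zero hr' hx), cpow_def_of_ne_zero hr', cpow_def_of_ne_zero hx,
    log_ofReal_mul hr hx, ofReal_log hr.le, ← exp_add, add_mul]

theorem neg_one_cpow_eq_exp (t : ℂ) : (-1 : ℂ) ^ t = exp (Real.pi * t * I) := by
  rw [cpow_def_of_ne_zero (by norm_num), log_neg_one]
  ring_nf

theorem cpow_add_cpow_sq_sub_mul {a b : ℂ} (ha : a ≠ 0) (hb : b ≠ 0) (t : ℂ) :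
    (a ^ t + b ^ t) ^ 2 - (a ^ (t - 1) + b ^ (t - 1)) * (a ^ (t + 1) + b ^ (t + 1)) =
      -((a - b) ^ 2 / (a * b)) * (a ^ t * b ^ t) := by
  rw [cpow_sub _ _ ha, cpow_sub _ _ hb, cpow_add _ _ ha, cpow_add _ _ hb, cpow_one, cpow_one]
  field_simp
  ring

theorem ofReal_cpow_add_cpow_sq_sub_mul_of_mul_eq_neg_one {a b : ℝ} (ha : 0 < a)
    (hab : a * b = -1) (t : ℂ) :
    ((a : ℂ) ^ t + (b : ℂ) ^ t) ^ 2 -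
        ((a : ℂ) ^ (t - 1) + (b : ℂ) ^ (t - 1)) * ((a : ℂ) ^ (t + 1) + (b : ℂ) ^ (t + 1)) =
      ((a - b) ^ 2 : ℝ) * (-1 : ℂ) ^ t := by
  have hb : b ≠ 0 := by rintro rfl; simp at hab
  have hab' : (a : ℂ) * b = -1 := by exact_mod_cast hab
  rw [cpow_add_cpow_sq_sub_mul (ofReal_ne_zero.mpr ha.ne') (ofReal_ne_zero.mpr hb),
    ← ofReal_mul_cpow ha (ofReal_ne_zero.mpr hb), hab']
  push_cast
  ring

end Complex

theorem lucas_roots_mul (P : ℝ) :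
    (P + √(P ^ 2 + 4)) / 2 * ((P - √(P ^ 2 + 4)) / 2) = -1 := by
  have hsq : √(P ^ 2 + 4) ^ 2 = P ^ 2 + 4 := Real.sq_sqrt (by positivity)
  linear_combination -hsq / 4

theorem lucas_root_pos (P : ℝ) : 0 < (P + √(P ^ 2 + 4)) / 2 := by
  have hlt : |P| < √(P ^ 2 + 4) := by
    rw [← Real.sqrt_sq_eq_abs]
    exact Real.sqrt_lt_sqrt (sq_nonneg P) (by linarith)
  linarith [neg_abs_le P]

theorem lucas_roots_sub_sq (P : ℝ) :
    ((P + √(P ^ 2 + 4)) / 2 - (P - √(P ^ 2 + 4)) / 2) ^ 2 = P ^ 2 + 4 := by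
  have hsq : √(P ^ 2 + 4) ^ 2 = P ^ 2 + 4 := Real.sq_sqrt (by positivity)
  linear_combination hsq

theorem lucas_helix_general (P : ℤ) (D : ℝ) (hD : D = (P : ℝ) ^ 2 + 4)
    (lam1 lam2 : ℝ) (hlam1 : lam1 = ((P : ℝ) + Real.sqrt D) / 2)
    (hlam2 : lam2 = ((P : ℝ) - Real.sqrt D) / 2)
    (g : ℝ → ℂ) (hg : ∀ t : ℝ, g t = (lam1 : ℂ) ^ (t : ℂ) + (lam2 : ℂ) ^ (t : ℂ)) :
    ∀ t : ℝ, g t ^ 2 - g (t - 1) * g (t + 1) = ((P : ℂ) ^ 2 + 4) * (-1 : ℂ) ^ (t : ℂ) ∧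
      (-1 : ℂ) ^ (t : ℂ) = Complex.exp (Real.pi * t * Complex.I) := by
  subst hD
  have hpos : 0 < lam1 := hlam1 ▸ lucas_root_pos P
  have hmul : lam1 * lam2 = -1 := hlam1 ▸ hlam2 ▸ lucas_roots_mul P
  have hsub : (lam1 - lam2) ^ 2 = (P : ℝ) ^ 2 + 4 := hlam1 ▸ hlam2 ▸ lucas_roots_sub_sq P
  intro t
  refine ⟨?_, neg_one_cpow_eq_exp t⟩
  rw [hg, hg, hg, ofReal_sub, ofReal_add, ofReal_one,
    ofReal_cpow_add_cpow_sq_sub_mul_of_mul_eq_neg_one hpos hmul, hsub]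
  norm_cast

/-- The P-Lucas helix: `g(t)² − g(t−1)·g(t+1) = (P²+4)·(−1)^t`, where `(−1 : ℂ)^t = exp(iπt)`,
so this curve is a helix of ratio `P² + 4` and pitch 2. -/
theorem lucas_helix (P : ℤ) (hP : 1 ≤ P) (D : ℝ) (hD : D = (P : ℝ) ^ 2 + 4)
    (lam1 lam2 : ℝ) (hlam1 : lam1 = ((P : ℝ) + Real.sqrt D) / 2)
    (hlam2 : lam2 = ((P : ℝ) - Real.sqrt D) / 2)
    (g : ℝ → ℂ) (hg : ∀ t : ℝ, g t = (lam1 : ℂ) ^ (t : ℂ) + (lam2 : ℂ) ^ (t : ℂ)) :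
    ∀ t : ℝ, g t ^ 2 - g (t - 1) * g (t + 1) = ((P : ℂ) ^ 2 + 4) * (-1 : ℂ) ^ (t : ℂ) ∧
      (-1 : ℂ) ^ (t : ℂ) = Complex.exp (Real.pi * t * Complex.I) :=
  lucas_helix_general P D hD lam1 lam2 hlam1 hlam2 g hg
end

section
/- Let P ≥ 1 be an integer and let L, F : ℤ → ℤ satisfy L 0 = 2, L 1 = P, F 0 = 0, F 1 = 1 and the recurrence x (n+2) = P·x (n+1) + x n for all integers n. Then for every integer k, (L k)² − (P² + 3)·(F k)² − (F (k−1))·(F (k+1)) = 3·(−1)^k. -/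
/-!
Both `n ↦ L n` and `n ↦ F (n + 1) + F (n - 1)` solve the recurrence with the same initial values,
so `L k = F (k + 1) + F (k - 1)`. Substituting this and `F (k + 1) - F (k - 1) = P F k` turns the
left-hand side into `3 (F (k - 1) F (k + 1) - F k ^ 2)`, and this Cassini term changes sign from
each index to the next, starting from `F (-1) F 1 = 1`.
-/

section LucasRecurrence

variable {R : Type*} [CommRing R] {P : R} {x y : ℤ → R}

def IsLucasRec (P : R) (x : ℤ → R) : Prop :=
  ∀ n : ℤ, x (n + 2) = P * x (n + 1) + x n

namespace IsLucasRec

theorem succ (hx : IsLucasRec P x) (n : ℤ) : x (n + 1) = P * x n + x (n - 1) := by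
  have h := hx (n - 1)
  rwa [show n - 1 + 2 = n + 1 by ring, sub_add_cancel] at h

theorem shift (hx : IsLucasRec P x) (m : ℤ) : IsLucasRec P (fun n ↦ x (n + m)) := fun n ↦ by
  simpa only [add_right_comm] using hx (n + m)

theorem add (hx : IsLucasRec P x) (hy : IsLucasRec P y) : IsLucasRec P (x + y) := fun n ↦ by
  simp only [Pi.add_apply, hx n, hy n]
  ring

theorem ext (hx : IsLucasRec P x) (hy : IsLucasRec P y) (h0 : x 0 = y 0) (h1 : x 1 = y 1) :
    x = y := by
  suffices ∀ n : ℤ, x n = y n ∧ x (n + 1) = y (n + 1) from funext fun n ↦ (this n).1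
  intro n
  induction n using Int.induction_on with
  | zero => exact ⟨h0, h1⟩
  | succ n ih =>
    refine ⟨ih.2, ?_⟩
    rw [add_assoc, one_add_one_eq_two, hx, hy, ih.1, ih.2]
  | pred n ih =>
    refine ⟨?_, by simpa using ih.1⟩
    have hxn := hx.succ (-n)
    have hyn := hy.succ (-n)
    linear_combination hyn - hxn + ih.2 - P * ih.1

theorem apply_neg_one (hx : IsLucasRec P x) : x (-1) = x 1 - P * x 0 := by
  have h := hx (-1)
  norm_num at h
  linear_combination -h

end IsLucasRec

theorem zpow_neg_one_mul_of_succ_eq_neg {u : ℤ → R} (hu : ∀ n, u (n + 1) = -u n) (n : ℤ) :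
    u n = ((-1 : Rˣ) ^ n : Rˣ) * u 0 := by
  induction n using Int.induction_on with
  | zero => simp
  | succ n ih => rw [hu, ih, zpow_add_one]; simp
  | pred n ih =>
    have h := hu (-n - 1)
    rw [sub_add_cancel] at h
    rw [zpow_sub_one, ← neg_eq_iff_eq_neg.mpr h, ih]
    simp

theorem IsLucasRec.cassini {F : ℤ → R} (hF : IsLucasRec P F) (hF0 : F 0 = 0) (hF1 : F 1 = 1)
    (k : ℤ) : F (k - 1) * F (k + 1) - F k ^ 2 = ((-1 : Rˣ) ^ k : Rˣ) := by
  have hsign : ∀ n : ℤ, F (n + 1 - 1) * F (n + 1 + 1) - F (n + 1) ^ 2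
      = -(F (n - 1) * F (n + 1) - F n ^ 2) := fun n ↦ by
    rw [add_sub_cancel_right, add_assoc, one_add_one_eq_two, hF n]
    linear_combination (-F (n + 1)) * hF.succ n
  simpa [hF0, hF1, hF.apply_neg_one] using
    zpow_neg_one_mul_of_succ_eq_neg (u := fun n ↦ F (n - 1) * F (n + 1) - F n ^ 2) hsign k

theorem IsLucasRec.eq_fib_add_fib {F : ℤ → R} (hF : IsLucasRec P F) (hF0 : F 0 = 0)
    (hF1 : F 1 = 1) {L : ℤ → R} (hL : IsLucasRec P L) (hL0 : L 0 = 2)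
    (hL1 : L 1 = P) (k : ℤ) : L k = F (k + 1) + F (k - 1) := by
  have hF2 : F 2 = P := by simpa [hF0, hF1] using hF 0
  refine congrFun (hL.ext ((hF.shift 1).add (hF.shift (-1))) ?_ ?_) k
  · simp [hL0, hF0, hF1, hF.apply_neg_one, one_add_one_eq_two]
  · simp [hL1, hF0, hF2]

end LucasRecurrence

theorem psi6_identity_general (P : ℤ)
    (L F : ℤ → ℤ) (hL0 : L 0 = 2) (hL1 : L 1 = P) (hF0 : F 0 = 0) (hF1 : F 1 = 1)
    (hLrec : ∀ n : ℤ, L (n + 2) = P * L (n + 1) + L n)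
    (hFrec : ∀ n : ℤ, F (n + 2) = P * F (n + 1) + F n) :
    ∀ k : ℤ, (L k) ^ 2 - (P ^ 2 + 3) * (F k) ^ 2 - F (k - 1) * F (k + 1) =
      3 * (((-1 : ℤˣ) ^ k : ℤˣ) : ℤ) := by
  intro k
  have hF : IsLucasRec P F := hFrec
  rw [← hF.cassini hF0 hF1 k, hF.eq_fib_add_fib hF0 hF1 hLrec hL0 hL1 k]
  linear_combination (F (k + 1) - F (k - 1) + P * F k) * hF.succ k

/-- `L k ² − (P²+3)·F k ² − F (k−1)·F (k+1) = 3·(−1)^k` for all integers `k`. -/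
theorem psi6_identity (P : ℤ) (hP : 1 ≤ P)
    (L F : ℤ → ℤ) (hL0 : L 0 = 2) (hL1 : L 1 = P) (hF0 : F 0 = 0) (hF1 : F 1 = 1)
    (hLrec : ∀ n : ℤ, L (n + 2) = P * L (n + 1) + L n)
    (hFrec : ∀ n : ℤ, F (n + 2) = P * F (n + 1) + F n) :
    ∀ k : ℤ, (L k) ^ 2 - (P ^ 2 + 3) * (F k) ^ 2 - F (k - 1) * F (k + 1) =
      3 * (((-1 : ℤˣ) ^ k : ℤˣ) : ℤ) :=
  psi6_identity_general P L F hL0 hL1 hF0 hF1 hLrec hFrec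
end

section
/- Let P ≥ 1 be an integer, D = P² + 4, λ₁ = (P + √D)/2, λ₂ = (P − √D)/2, and define g(t) = (λ₁ : ℂ)^t + (λ₂ : ℂ)^t and h(t) = ((λ₁ : ℂ)^t − (λ₂ : ℂ)^t)/√D using principal complex powers. Then for every real t, g(t)² − (P² + 2)·h(t)² − 2·h(t−1)·h(t+1) = 2·(−1 : ℂ)^t, where (−1 : ℂ)^t = exp(iπt); in particular this map is representable as a helix of ratio 2 and pitch 2. -/
/-!
Since `λ₁ λ₂ = -1` with `λ₁ > 0 > λ₂`, the principal powers satisfy `λ₁ ^ t λ₂ ^ t = (-1) ^ t`.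
Writing `A = λ₁ ^ t`, `B = λ₂ ^ t`, the left-hand side is a rational expression in `A`, `B`, `λ₁`,
`λ₂`, `√D`, which collapses to `2 A B` using only `λ₁ + λ₂ = P`, `λ₁ λ₂ = -1` and `√D ² = P² + 4`.
-/

open Complex

theorem cpow_neg_one_eq_exp (x : ℂ) : (-1 : ℂ) ^ x = exp (Real.pi * x * I) := by
  rw [cpow_def_of_ne_zero (by norm_num), log_neg_one]
  ring_nf

theorem ofReal_cpow_mul_ofReal_cpow_of_nonneg_of_nonpos {a b : ℝ} (ha : 0 ≤ a) (hb : b ≤ 0)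
    (x : ℂ) : (a : ℂ) ^ x * (b : ℂ) ^ x = ((a * b : ℝ) : ℂ) ^ x := by
  rw [ofReal_cpow_of_nonpos hb, ofReal_cpow_of_nonpos (mul_nonpos_of_nonneg_of_nonpos ha hb),
    ← mul_assoc, ← ofReal_neg, ← ofReal_neg, ← mul_cpow_ofReal_nonneg ha (neg_nonneg.2 hb),
    ← ofReal_mul, mul_neg]

theorem cpow_ofReal_sub_one {x : ℂ} (hx : x ≠ 0) (t : ℝ) :
    x ^ ((t - 1 : ℝ) : ℂ) = x ^ (t : ℂ) / x := by
  rw [ofReal_sub, ofReal_one, cpow_sub _ _ hx, cpow_one]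

theorem cpow_ofReal_add_one {x : ℂ} (hx : x ≠ 0) (t : ℝ) :
    x ^ ((t + 1 : ℝ) : ℂ) = x ^ (t : ℂ) * x := by
  rw [ofReal_add, ofReal_one, cpow_add _ _ hx, cpow_one]

theorem helix_identity {K : Type*} [Field K] {p l₁ l₂ s : K} (hsum : l₁ + l₂ = p)
    (hprod : l₁ * l₂ = -1) (hs : s ^ 2 = p ^ 2 + 4) (hs0 : s ≠ 0) (A B : K) :
    (A + B) ^ 2 - (p ^ 2 + 2) * ((A - B) / s) ^ 2
      - 2 * ((A / l₁ - B / l₂) / s * ((A * l₁ - B * l₂) / s)) = 2 * (A * B) := by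
  have hl₁ : l₁ ≠ 0 := left_ne_zero_of_mul (hprod ▸ neg_ne_zero.2 one_ne_zero)
  have hl₂ : l₂ ≠ 0 := right_ne_zero_of_mul (hprod ▸ neg_ne_zero.2 one_ne_zero)
  subst hsum
  field_simp
  linear_combination (A ^ 2 + B ^ 2) * l₁ * l₂ * hs
    + A * B * (2 * (l₁ ^ 2 + l₂ ^ 2) + 4 * l₁ * l₂) * hprod

theorem psi5_helix_general (P : ℤ) (D : ℝ) (hD : D = (P : ℝ) ^ 2 + 4)
    (lam1 lam2 : ℝ) (hlam1 : lam1 = ((P : ℝ) + Real.sqrt D) / 2)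
    (hlam2 : lam2 = ((P : ℝ) - Real.sqrt D) / 2)
    (g h : ℝ → ℂ)
    (hg : ∀ t : ℝ, g t = (lam1 : ℂ) ^ (t : ℂ) + (lam2 : ℂ) ^ (t : ℂ))
    (hh : ∀ t : ℝ, h t = ((lam1 : ℂ) ^ (t : ℂ) - (lam2 : ℂ) ^ (t : ℂ)) / (Real.sqrt D : ℂ)) :
    ∀ t : ℝ, g t ^ 2 - ((P : ℂ) ^ 2 + 2) * h t ^ 2 - 2 * (h (t - 1) * h (t + 1)) =
      2 * (-1 : ℂ) ^ (t : ℂ) ∧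
      (-1 : ℂ) ^ (t : ℂ) = Complex.exp (Real.pi * t * Complex.I) := by
  have hsq : Real.sqrt D ^ 2 = (P : ℝ) ^ 2 + 4 := by
    rw [Real.sq_sqrt (hD ▸ by positivity), hD]
  have hsum : lam1 + lam2 = P := by rw [hlam1, hlam2]; ring
  have hprod : lam1 * lam2 = -1 := by
    rw [hlam1, hlam2]; linear_combination (-1 / 4 : ℝ) * hsq
  have hl1 : 0 < lam1 := by nlinarith [Real.sqrt_nonneg D]
  have hl2 : lam2 < 0 := by nlinarith
  have hL1 : (lam1 : ℂ) ≠ 0 := ofReal_ne_zero.2 hl1.ne'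
  have hL2 : (lam2 : ℂ) ≠ 0 := ofReal_ne_zero.2 hl2.ne
  have hs0 : (Real.sqrt D : ℂ) ≠ 0 := ofReal_ne_zero.2 (by nlinarith)
  intro t
  refine ⟨?_, cpow_neg_one_eq_exp t⟩
  rw [hg, hh, hh, hh, cpow_ofReal_sub_one hL1, cpow_ofReal_sub_one hL2, cpow_ofReal_add_one hL1,
    cpow_ofReal_add_one hL2, helix_identity (by exact_mod_cast hsum) (by exact_mod_cast hprod)
    (by exact_mod_cast hsq) hs0, ofReal_cpow_mul_ofReal_cpow_of_nonneg_of_nonpos hl1.le hl2.le,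
    hprod, ofReal_neg, ofReal_one]

/-- `g(t)² − (P²+2)·h(t)² − 2·h(t−1)·h(t+1) = 2·(−1)^t`, where `(−1 : ℂ)^t = exp(iπt)`;
hence this map is representable as a helix of ratio 2 and pitch 2. -/
theorem psi5_helix (P : ℤ) (hP : 1 ≤ P) (D : ℝ) (hD : D = (P : ℝ) ^ 2 + 4)
    (lam1 lam2 : ℝ) (hlam1 : lam1 = ((P : ℝ) + Real.sqrt D) / 2)
    (hlam2 : lam2 = ((P : ℝ) - Real.sqrt D) / 2)
    (g h : ℝ → ℂ)
    (hg : ∀ t : ℝ, g t = (lam1 : ℂ) ^ (t : ℂ) + (lam2 : ℂ) ^ (t : ℂ))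
    (hh : ∀ t : ℝ, h t = ((lam1 : ℂ) ^ (t : ℂ) - (lam2 : ℂ) ^ (t : ℂ)) / (Real.sqrt D : ℂ)) :
    ∀ t : ℝ, g t ^ 2 - ((P : ℂ) ^ 2 + 2) * h t ^ 2 - 2 * (h (t - 1) * h (t + 1)) =
      2 * (-1 : ℂ) ^ (t : ℂ) ∧
      (-1 : ℂ) ^ (t : ℂ) = Complex.exp (Real.pi * t * Complex.I) :=
  psi5_helix_general P D hD lam1 lam2 hlam1 hlam2 g h hg hh
end
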